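/- arXiv:1705.11074 — 7 statements merged into one kernel-verified Lean document; each statement's English description precedes it below -/
import Mathlib

section
/- Let a > 0, b ∈ ℝ, and let w be a path of linear growth. Then the stationary-orbit coordinate is invariant under the pathwise solution operator: φ_{a,b}(t, w, x̃_{a,b}(w)) = x̃_{a,b}(θ_t w) for every t ∈ ℝ. -/
open MeasureTheory Filter Topology

/-- The pathwise solution operator `φ_{a,b}` of the linear scalar SDE `dX = aX dt + b dW`. -/
noncomputable def phiSol (a b t : ℝ) (w : ℝ → ℝ) (x : ℝ) : ℝ :=
  Real.exp (a * t) * x + b * w t +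
    a * b * Real.exp (a * t) * ∫ s in (0 : ℝ)..t, Real.exp (-a * s) * w s

/-- The shift `θ_t w` of a path `w`: `(θ_t w)(s) = w(t + s) - w(t)`. -/
def shiftPath (t : ℝ) (w : ℝ → ℝ) : ℝ → ℝ := fun s => w (t + s) - w t

/-- The stationary-orbit coordinate of the expanding component:
`x̃_{a,b}(w) = -a b ∫₀^∞ e^{-a s} w(s) ds`. -/
noncomputable def xStat (a b : ℝ) (w : ℝ → ℝ) : ℝ :=
  -(a * b) * ∫ s in Set.Ioi (0 : ℝ), Real.exp (-a * s) * w s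

/-!
Write `I(t) = ∫_{(t,∞)} e^{-a s} w(s) ds`, which converges because `e^{-a s}` beats the linear
growth of `w`. Substituting `s ↦ t + s` gives
`∫_{(0,∞)} e^{-a s} (θ_t w)(s) ds = e^{a t} I(t) - w(t) / a`, while `I(t) = I(0) - ∫₀ᵗ e^{-a s} w(s) ds`.
Inserting both into `φ_{a,b}(t, w, -a b I(0))` the `b w(t)` terms and the integrals over `[0, t]`
cancel, leaving `-a b e^{a t} I(t) + b w(t) = x̃_{a,b}(θ_t w)`.
-/

open Set Real

section Translation

variable {E : Type*} [NormedAddCommGroup E]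

theorem integrableOn_Ioi_comp_add_left {f : ℝ → E} {t c : ℝ} :
    IntegrableOn (fun s => f (t + s)) (Ioi c) ↔ IntegrableOn f (Ioi (t + c)) := by
  have := (measurePreserving_add_left volume t).integrableOn_comp_preimage
    (measurableEmbedding_addLeft t) (f := f) (s := Ioi (t + c))
  rwa [preimage_const_add_Ioi, add_sub_cancel_left] at this

theorem setIntegral_Ioi_comp_add_left [NormedSpace ℝ E] (f : ℝ → E) (t c : ℝ) :
    ∫ s in Ioi c, f (t + s) = ∫ s in Ioi (t + c), f s := by
  have := (measurePreserving_add_left volume t).setIntegral_preimage_emb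
    (measurableEmbedding_addLeft t) f (Ioi (t + c))
  rwa [preimage_const_add_Ioi, add_sub_cancel_left] at this

end Translation

section LinearGrowth

variable {a C : ℝ} {w : ℝ → ℝ}

theorem isBigO_atTop_id_of_linear_growth (hgrowth : ∀ s, |w s| ≤ C * (1 + |s|)) :
    w =O[atTop] fun s => s := by
  have hC : 0 ≤ C := (abs_nonneg _).trans (by simpa using hgrowth 0)
  refine Asymptotics.IsBigO.of_bound (2 * C) ?_
  filter_upwards [eventually_ge_atTop 1] with s hs
  rw [norm_eq_abs, norm_eq_abs, abs_of_nonneg (by linarith : (0 : ℝ) ≤ s)]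
  calc |w s| ≤ C * (1 + |s|) := hgrowth s
    _ ≤ 2 * C * s := by rw [abs_of_nonneg (by linarith)]; nlinarith

theorem integrableOn_Ioi_exp_neg_mul_of_linear_growth (ha : 0 < a) (hw : Continuous w)
    (hgrowth : ∀ s, |w s| ≤ C * (1 + |s|)) (c : ℝ) :
    IntegrableOn (fun s => exp (-a * s) * w s) (Ioi c) := by
  have hw_exp : w =O[atTop] fun s => exp (a / 2 * s) :=
    (isBigO_atTop_id_of_linear_growth hgrowth).trans
      (by simpa using (isLittleO_pow_exp_pos_mul_atTop 1 (half_pos ha)).isBigO)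
  refine integrable_of_isBigO_exp_neg (half_pos ha) (by fun_prop) ?_
  refine ((Asymptotics.isBigO_refl (fun s => exp (-a * s)) atTop).mul hw_exp).congr_right
    fun s => ?_
  rw [← exp_add]
  ring_nf

end LinearGrowth

theorem setIntegral_Ioi_exp_neg_mul_shiftPath {a t : ℝ} {w : ℝ → ℝ} (ha : 0 < a)
    (hint : IntegrableOn (fun s => exp (-a * s) * w s) (Ioi t)) :
    ∫ s in Ioi 0, exp (-a * s) * shiftPath t w s
      = exp (a * t) * (∫ s in Ioi t, exp (-a * s) * w s) - w t / a := by
  have hexp : ∫ s in Ioi (0 : ℝ), exp (-a * s) = 1 / a := by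
    rw [integral_exp_mul_Ioi (neg_lt_zero.mpr ha)]
    field_simp
    simp
  have hshift : ∀ s, exp (-a * s) * shiftPath t w s
      = exp (a * t) * (exp (-a * (t + s)) * w (t + s)) - w t * exp (-a * s) := by
    intro s
    rw [shiftPath, ← mul_assoc, ← exp_add]
    ring_nf
  have htranslate : IntegrableOn (fun s => exp (-a * (t + s)) * w (t + s)) (Ioi 0) :=
    (integrableOn_Ioi_comp_add_left (f := fun u => exp (-a * u) * w u)).mpr
      (by rwa [add_zero])
  simp_rw [hshift]
  rw [integral_sub (htranslate.const_mul _)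
      ((integrableOn_exp_mul_Ioi (neg_lt_zero.mpr ha) 0).const_mul _),
    integral_const_mul, integral_const_mul, hexp,
    setIntegral_Ioi_comp_add_left (fun u => exp (-a * u) * w u), add_zero]
  ring

theorem xStat_invariant_general
    (a : ℝ) (ha : 0 < a) (b : ℝ) (w : ℝ → ℝ)
    (hw : Continuous w)
    (C : ℝ) (hgrowth : ∀ s : ℝ, |w s| ≤ C * (1 + |s|)) :
    ∀ t : ℝ, phiSol a b t w (xStat a b w) = xStat a b (shiftPath t w) := by
  intro t
  have hint := integrableOn_Ioi_exp_neg_mul_of_linear_growth ha hw hgrowth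
  simp only [phiSol, xStat]
  rw [setIntegral_Ioi_exp_neg_mul_shiftPath ha (hint t),
    ← intervalIntegral.integral_Ioi_sub_Ioi' (hint 0) (hint t)]
  field_simp
  ring

/-- **Invariance of the stationary-orbit coordinate under the pathwise solution operator.**
For `a > 0`, `b : ℝ` and a path `w` of linear growth,
`φ_{a,b}(t, w, x̃_{a,b}(w)) = x̃_{a,b}(θ_t w)` for every `t : ℝ`. -/
theorem xStat_invariant
    (a : ℝ) (ha : 0 < a) (b : ℝ) (w : ℝ → ℝ)
    (hw : Continuous w) (hw0 : w 0 = 0)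
    (C : ℝ) (hC : 0 ≤ C) (hgrowth : ∀ s : ℝ, |w s| ≤ C * (1 + |s|)) :
    ∀ t : ℝ, phiSol a b t w (xStat a b w) = xStat a b (shiftPath t w) :=
  xStat_invariant_general a ha b w hw C hgrowth
end

section
/- Let a > 0, b ∈ ℝ, and let w be a path of linear growth. Then the stationary-orbit coordinate of the contracting component is invariant under the pathwise solution operator: ψ_{a,b}(t, w, ỹ_{a,b}(w)) = ỹ_{a,b}(θ_t w) for every t ∈ ℝ. -/
open MeasureTheory Filter Topology

/-- The pathwise solution operator `ψ_{a,b}` of the contracting component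
`dY = -aY dt + b dW` of the noisy saddle. -/
noncomputable def psiSol (a b t : ℝ) (w : ℝ → ℝ) (y : ℝ) : ℝ :=
  Real.exp (-a * t) * y + b * w t -
    a * b * Real.exp (-a * t) * ∫ s in (0 : ℝ)..t, Real.exp (a * s) * w s

/-- The stationary-orbit coordinate of the contracting component:
`ỹ_{a,b}(w) = -a b ∫_{-∞}^0 e^{a s} w(s) ds`. -/
noncomputable def yStat (a b : ℝ) (w : ℝ → ℝ) : ℝ :=
  -(a * b) * ∫ s in Set.Iio (0 : ℝ), Real.exp (a * s) * w s

/-!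
Write `f(s) = e^{as} w(s)`. Linear growth of `w` makes `f` integrable on every half-line
`(-∞, c]`, and the substitution `u = t + s` gives
`∫_{-∞}^0 e^{as} (w(t+s) - w(t)) ds = e^{-at} ∫_{-∞}^t f - w(t)/a`.
Splitting `∫_{-∞}^t f = ∫_{-∞}^0 f + ∫_0^t f` turns `ỹ(θ_t w)` into `ψ(t, w, ỹ(w))`.
-/

open Set Real

theorem integrableOn_Iic_comp_add_left_iff {E : Type*} [NormedAddCommGroup E] {f : ℝ → E}
    (t c : ℝ) :
    IntegrableOn (fun s => f (t + s)) (Iic c) ↔ IntegrableOn f (Iic (t + c)) := by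
  have h := (measurePreserving_add_left volume t).integrableOn_comp_preimage
    (Homeomorph.addLeft t).measurableEmbedding (f := f) (s := Iic (t + c))
  rwa [show (t + ·) ⁻¹' Iic (t + c) = Iic c by ext; simp] at h

theorem setIntegral_Iic_comp_add_left {E : Type*} [NormedAddCommGroup E] [NormedSpace ℝ E]
    (f : ℝ → E) (t c : ℝ) :
    ∫ s in Iic c, f (t + s) = ∫ u in Iic (t + c), f u := by
  have h := (measurePreserving_add_left volume t).setIntegral_preimage_emb
    (Homeomorph.addLeft t).measurableEmbedding f (Iic (t + c))
  rwa [show (t + ·) ⁻¹' Iic (t + c) = Iic c by ext; simp] at h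

variable {a : ℝ}

theorem one_add_abs_le_mul_exp (ha : 0 < a) {s : ℝ} (hs : s ≤ 0) :
    1 + |s| ≤ (1 + 2 / a) * exp (-(a / 2 * s)) := by
  have hlin : -(a / 2 * s) ≤ exp (-(a / 2 * s)) := by linarith [add_one_le_exp (-(a / 2 * s))]
  have hone : 1 ≤ exp (-(a / 2 * s)) := one_le_exp (by nlinarith)
  have habs : |s| = 2 / a * -(a / 2 * s) := by rw [abs_of_nonpos hs]; field_simp
  rw [habs]
  nlinarith [div_pos two_pos ha]

theorem integrableOn_exp_mul_mul_Iic {w : ℝ → ℝ} {C : ℝ} (ha : 0 < a) (hw : Continuous w)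
    (hgrowth : ∀ s, |w s| ≤ C * (1 + |s|)) (c : ℝ) :
    IntegrableOn (fun s => exp (a * s) * w s) (Iic c) := by
  have hC : 0 ≤ C := by simpa using (abs_nonneg _).trans (hgrowth 0)
  have hcont : Continuous fun s => exp (a * s) * w s := by fun_prop
  have hbound :
      ∀ s ∈ Iic (0 : ℝ), ‖exp (a * s) * w s‖ ≤ C * (1 + 2 / a) * exp (a / 2 * s) := by
    intro s hs
    calc ‖exp (a * s) * w s‖ = exp (a * s) * |w s| := by
          rw [Real.norm_eq_abs, abs_mul, abs_of_pos (exp_pos _)]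
      _ ≤ exp (a * s) * (C * ((1 + 2 / a) * exp (-(a / 2 * s)))) := by
          gcongr
          exact (hgrowth s).trans (by gcongr; exact one_add_abs_le_mul_exp ha hs)
      _ = C * (1 + 2 / a) * exp (a / 2 * s) := by
          rw [mul_left_comm, mul_left_comm (exp _), ← exp_add]; ring_nf
  have hIic0 : IntegrableOn (fun s => exp (a * s) * w s) (Iic 0) :=
    ((integrableOn_exp_mul_Iic (half_pos ha) 0).const_mul _).mono'
      hcont.aestronglyMeasurable.restrict
      ((ae_restrict_iff' measurableSet_Iic).mpr (.of_forall hbound))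
  exact (hIic0.union hcont.integrableOn_Icc).mono_set Iic_subset_Iic_union_Icc

theorem integral_Iio_exp_mul_shiftPath (ha : 0 < a) {w : ℝ → ℝ}
    (hf : ∀ c, IntegrableOn (fun s => exp (a * s) * w s) (Iic c)) (t : ℝ) :
    ∫ s in Iio 0, exp (a * s) * shiftPath t w s =
      exp (-a * t) * ((∫ s in Iic 0, exp (a * s) * w s) + ∫ s in 0..t, exp (a * s) * w s)
        - w t / a := by
  have hsplit := intervalIntegral.integral_Iic_sub_Iic (hf 0) (hf t)
  have hshift : ∀ s, exp (a * s) * shiftPath t w s =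
      exp (-a * t) * (exp (a * (t + s)) * w (t + s)) - exp (a * s) * w t := by
    intro s
    rw [shiftPath, ← mul_assoc, ← exp_add]
    ring_nf
  have hint : IntegrableOn (fun s => exp (a * (t + s)) * w (t + s)) (Iic 0) :=
    (integrableOn_Iic_comp_add_left_iff (f := fun s => exp (a * s) * w s) t 0).mpr
      (by simpa using hf t)
  rw [← integral_Iic_eq_integral_Iio, funext hshift,
    integral_sub (hint.const_mul _) ((integrableOn_exp_mul_Iic ha 0).mul_const _),
    integral_const_mul, integral_mul_const,
    setIntegral_Iic_comp_add_left (fun s => exp (a * s) * w s), integral_exp_mul_Iic ha, add_zero,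
    ← hsplit, mul_zero, exp_zero]
  ring

theorem yStat_invariant_general
    (a : ℝ) (ha : 0 < a) (b : ℝ) (w : ℝ → ℝ)
    (hw : Continuous w)
    (C : ℝ) (hgrowth : ∀ s : ℝ, |w s| ≤ C * (1 + |s|)) :
    ∀ t : ℝ, psiSol a b t w (yStat a b w) = yStat a b (shiftPath t w) := by
  intro t
  rw [yStat, yStat, integral_Iio_exp_mul_shiftPath ha (integrableOn_exp_mul_mul_Iic ha hw hgrowth),
    ← integral_Iic_eq_integral_Iio, psiSol]
  field_simp
  ring

/-- **Invariance of the contracting stationary-orbit coordinate under the pathwise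
solution operator.** For `a > 0`, `b : ℝ` and a path `w` of linear growth,
`ψ_{a,b}(t, w, ỹ_{a,b}(w)) = ỹ_{a,b}(θ_t w)` for every `t : ℝ`. -/
theorem yStat_invariant
    (a : ℝ) (ha : 0 < a) (b : ℝ) (w : ℝ → ℝ)
    (hw : Continuous w) (hw0 : w 0 = 0)
    (C : ℝ) (hC : 0 ≤ C) (hgrowth : ∀ s : ℝ, |w s| ≤ C * (1 + |s|)) :
    ∀ t : ℝ, psiSol a b t w (yStat a b w) = yStat a b (shiftPath t w) :=
  yStat_invariant_general a ha b w hw C hgrowth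
end

section
/- Consider the noisy saddle with parameters a₁, a₂ > 0 and b₁, b₂ ∈ ℝ, driven by paths w¹, w² of linear growth. For all ε₁, ε₂ ∈ ℝ and every t ∈ ℝ, the solution starting at the perturbed point (x̃ + ε₁, ỹ + ε₂) separates from the stationary orbit exactly exponentially: ( φ_{a₁,b₁}(t, w¹, x̃_{a₁,b₁}(w¹) + ε₁), ψ_{a₂,b₂}(t, w², ỹ_{a₂,b₂}(w²) + ε₂) ) − ( x̃_{a₁,b₁}(θ_t w¹), ỹ_{a₂,b₂}(θ_t w²) ) = ( ε₁ e^{a₁ t}, ε₂ e^{−a₂ t} ). -/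
open MeasureTheory Filter Topology

section NSaux

open Set Real

lemma NS.integrableOn_exp_mul_Iic {a : ℝ} (ha : 0 < a) (c : ℝ) :
    IntegrableOn (fun s : ℝ => Real.exp (a * s)) (Set.Iic c) := by
  have A : MeasurableEmbedding fun x : ℝ => -x :=
    (Homeomorph.neg ℝ).measurableEmbedding
  rw [← Measure.map_neg_eq_self (volume : Measure ℝ)]
  rw [MeasurableEmbedding.integrableOn_map_iff A]
  simp only [Function.comp_def, neg_preimage, neg_Iic]
  rw [integrableOn_Ici_iff_integrableOn_Ioi]
  simpa [mul_comm, neg_mul, mul_neg] using exp_neg_integrableOn_Ioi (-c) ha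

lemma NS.integral_exp_mul_Iic_zero {a : ℝ} (ha : 0 < a) :
    ∫ s in Set.Iic (0:ℝ), Real.exp (a * s) = 1 / a := by
  have h := integral_comp_neg_Ioi (0:ℝ) (fun s => Real.exp (a * s))
  rw [neg_zero] at h
  rw [← h]
  have h2 := integral_comp_mul_left_Ioi (fun x => Real.exp (-x)) 0 ha
  simp only [mul_zero, integral_exp_neg_Ioi_zero, smul_eq_mul, mul_one] at h2
  simp only [mul_neg]
  rw [show (fun x : ℝ => Real.exp (-(a * x))) = fun x : ℝ => (fun y => Real.exp (-y)) (a * x) from rfl] at h2 ⊢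
  rw [h2, one_div]

lemma NS.setIntegral_Iic_add (f : ℝ → ℝ) (t c : ℝ) :
    ∫ s in Set.Iic c, f (t + s) = ∫ u in Set.Iic (c + t), f u := by
  have A : MeasurableEmbedding fun x : ℝ => x + t :=
    (Homeomorph.addRight t).measurableEmbedding
  have h := A.setIntegral_map (μ := volume) f (Set.Iic (c + t))
  rw [map_add_right_eq_self volume t] at h
  rw [h, Set.preimage_add_const_Iic, add_sub_cancel_right]
  simp_rw [add_comm]

lemma NS.integrableOn_exp_mul_lin {a : ℝ} (ha : 0 < a) {w : ℝ → ℝ} (hw : Continuous w)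
    {C : ℝ} (hg : ∀ s, |w s| ≤ C * (1 + |s|)) (c : ℝ) :
    IntegrableOn (fun s : ℝ => Real.exp (a * s) * w s) (Set.Iic c) := by
  have hC : 0 ≤ C := by
    have h0 := (abs_nonneg (w 0)).trans (hg 0)
    simp only [abs_zero, add_zero, mul_one] at h0
    exact h0
  have hbase : IntegrableOn (fun s : ℝ => Real.exp (a / 2 * s)) (Set.Iic c) :=
    NS.integrableOn_exp_mul_Iic (half_pos ha) c
  have hcont : Continuous fun s : ℝ => Real.exp (a * s) * w s :=
    (Real.continuous_exp.comp (continuous_const.mul continuous_id)).mul hw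
  refine Integrable.mono' (hbase.const_mul (C * (1 + 2 / a) * Real.exp (a * max c 0)))
    hcont.aestronglyMeasurable.restrict ?_
  rw [MeasureTheory.ae_restrict_iff' measurableSet_Iic]
  refine Filter.Eventually.of_forall fun s hs => ?_
  have hs' : s ≤ c := hs
  have E := Real.exp_pos (a / 2 * |s|)
  have h1 : (1 : ℝ) + |s| ≤ (1 + 2 / a) * Real.exp (a / 2 * |s|) := by
    have e1 : a / 2 * |s| + 1 ≤ Real.exp (a / 2 * |s|) := Real.add_one_le_exp _
    have e2 : (1 : ℝ) ≤ Real.exp (a / 2 * |s|) := Real.one_le_exp (by positivity)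
    have h2a : (0:ℝ) < 2 / a := by positivity
    have key : 2 / a * (a / 2 * |s|) = |s| := by field_simp
    have e3 := mul_le_mul_of_nonneg_left e1 h2a.le
    rw [mul_add, mul_one, key] at e3
    nlinarith [e3, e2, h2a]
  have h2 : Real.exp (a * s) * Real.exp (a / 2 * |s|)
      ≤ Real.exp (a * max c 0) * Real.exp (a / 2 * s) := by
    rw [← Real.exp_add, ← Real.exp_add]
    apply Real.exp_le_exp.2
    rcases abs_cases s with ⟨he, hnn⟩ | ⟨he, hneg⟩ <;> rw [he] <;>
      nlinarith [le_max_left c 0, le_max_right c 0, ha.le]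
  calc ‖Real.exp (a * s) * w s‖ = Real.exp (a * s) * |w s| := by
        rw [norm_mul, Real.norm_eq_abs, Real.norm_eq_abs, abs_of_pos (Real.exp_pos _)]
    _ ≤ Real.exp (a * s) * (C * (1 + |s|)) :=
        mul_le_mul_of_nonneg_left (hg s) (Real.exp_pos _).le
    _ ≤ C * (1 + 2 / a) * Real.exp (a * max c 0) * Real.exp (a / 2 * s) := by
        have := mul_le_mul_of_nonneg_left h1 (mul_nonneg hC (Real.exp_pos (a*s)).le)
        nlinarith [Real.exp_pos (a * s), Real.exp_pos (a / 2 * s), h2,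
          mul_le_mul_of_nonneg_left h2 (mul_nonneg hC (by positivity : (0:ℝ) ≤ 1 + 2/a))]

lemma NS.psi_key {a : ℝ} (b : ℝ) (ha : 0 < a) {w : ℝ → ℝ} (hw : Continuous w)
    {C : ℝ} (hg : ∀ s, |w s| ≤ C * (1 + |s|)) (ε t : ℝ) :
    psiSol a b t w (yStat a b w + ε) - yStat a b (shiftPath t w) = ε * Real.exp (-a * t) := by
  have hC : 0 ≤ C := by
    have h0 := (abs_nonneg (w 0)).trans (hg 0)
    simp only [abs_zero, add_zero, mul_one] at h0
    exact h0
  set J : ℝ → ℝ := fun c => ∫ s in Set.Iic c, Real.exp (a * s) * w s with hJdef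
  have hJint : ∀ c, IntegrableOn (fun s : ℝ => Real.exp (a * s) * w s) (Set.Iic c) :=
    fun c => NS.integrableOn_exp_mul_lin ha hw hg c
  have hIio : ∀ g : ℝ → ℝ, (∫ s in Set.Iio (0:ℝ), g s) = ∫ s in Set.Iic (0:ℝ), g s :=
    fun g => setIntegral_congr_set Iio_ae_eq_Iic
  -- yStat w = -(a*b) * J 0
  have hy : yStat a b w = -(a * b) * J 0 := by rw [yStat, hIio]
  -- interval integral = J t - J 0
  have hsplit : (∫ s in (0:ℝ)..t, Real.exp (a * s) * w s) = J t - J 0 :=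
    (intervalIntegral.integral_Iic_sub_Iic (hJint 0) (hJint t)).symm
  -- translation
  have hwt : ∀ s : ℝ, |w (t + s)| ≤ (C * (1 + |t|)) * (1 + |s|) := by
    intro s
    calc |w (t + s)| ≤ C * (1 + |t + s|) := hg _
      _ ≤ (C * (1 + |t|)) * (1 + |s|) := by
          have h := abs_add_le t s
          nlinarith [mul_le_mul_of_nonneg_left h hC,
            mul_nonneg (mul_nonneg hC (abs_nonneg t)) (abs_nonneg s)]
  have hint1 : IntegrableOn (fun s : ℝ => Real.exp (a * s) * w (t + s)) (Set.Iic (0:ℝ)) :=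
    NS.integrableOn_exp_mul_lin ha (hw.comp (continuous_const.add continuous_id)) hwt 0
  have hint2 : IntegrableOn (fun s : ℝ => Real.exp (a * s) * w t) (Set.Iic (0:ℝ)) :=
    (NS.integrableOn_exp_mul_Iic ha 0).mul_const (w t)
  have htrans : (∫ s in Set.Iic (0:ℝ), Real.exp (a * s) * w (t + s))
      = Real.exp (-(a * t)) * J t := by
    have hpt : ∀ s : ℝ, Real.exp (a * s) * w (t + s)
        = Real.exp (-(a * t)) * ((fun u => Real.exp (a * u) * w u) (t + s)) := by
      intro s
      rw [← mul_assoc, ← Real.exp_add, show -(a * t) + a * (t + s) = a * s by ring]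
    simp_rw [hpt]
    rw [MeasureTheory.integral_const_mul, NS.setIntegral_Iic_add (fun u => Real.exp (a * u) * w u) t 0,
      zero_add]
  have hshift : yStat a b (shiftPath t w)
      = -(a * b) * (Real.exp (-(a * t)) * J t - w t * (1 / a)) := by
    rw [yStat, hIio]
    have : (∫ s in Set.Iic (0:ℝ), Real.exp (a * s) * shiftPath t w s)
        = (∫ s in Set.Iic (0:ℝ), Real.exp (a * s) * w (t + s))
          - ∫ s in Set.Iic (0:ℝ), Real.exp (a * s) * w t := by
      rw [← MeasureTheory.integral_sub hint1 hint2]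
      congr 1; funext s; simp only [shiftPath]; ring
    rw [this, htrans, MeasureTheory.integral_mul_const, NS.integral_exp_mul_Iic_zero ha]
    ring
  rw [psiSol, hy, hsplit, hshift]
  have hexp : Real.exp (-a * t) = Real.exp (-(a * t)) := by ring_nf
  rw [hexp]
  field_simp
  ring

lemma NS.psiSol_neg (a b t : ℝ) (w : ℝ → ℝ) (x : ℝ) :
    psiSol a b (-t) (fun s => w (-s)) x = phiSol a b t w x := by
  unfold psiSol phiSol
  have h := intervalIntegral.integral_comp_neg (a := (0:ℝ)) (b := -t)
    (fun u => Real.exp (-a * u) * w u)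
  simp only [neg_zero, neg_neg] at h
  have h2 : (∫ s in (0:ℝ)..(-t), Real.exp (a * s) * w (-s))
      = ∫ x in t..(0:ℝ), Real.exp (-a * x) * w x := by
    rw [← h]
    congr 1; funext s; rw [show -a * -s = a * s by ring]
  rw [h2, intervalIntegral.integral_symm, show -a * -t = a * t by ring]
  simp only [neg_neg]
  ring

lemma NS.yStat_neg (a b : ℝ) (w : ℝ → ℝ) :
    yStat a b (fun s => w (-s)) = xStat a b w := by
  unfold yStat xStat
  congr 1
  rw [setIntegral_congr_set Iio_ae_eq_Iic]
  have h := integral_comp_neg_Iic (0:ℝ) (fun s => Real.exp (-a * s) * w s)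
  simp only [neg_zero] at h
  rw [← h]
  congr 1; funext s; rw [show -a * -s = a * s by ring]

lemma NS.shiftPath_neg (t : ℝ) (w : ℝ → ℝ) :
    shiftPath (-t) (fun s => w (-s)) = fun s => (shiftPath t w) (-s) := by
  funext s
  show w (-(-t + s)) - w (-(-t)) = w (t + -s) - w t
  rw [show -(-t + s) = t + -s by ring, neg_neg]

lemma NS.phi_key {a : ℝ} (b : ℝ) (ha : 0 < a) {w : ℝ → ℝ} (hw : Continuous w)
    {C : ℝ} (hg : ∀ s, |w s| ≤ C * (1 + |s|)) (ε t : ℝ) :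
    phiSol a b t w (xStat a b w + ε) - xStat a b (shiftPath t w) = ε * Real.exp (a * t) := by
  have hv : ∀ s : ℝ, |w (-s)| ≤ C * (1 + |s|) := by
    intro s; simpa [abs_neg] using hg (-s)
  have h := NS.psi_key (w := fun s => w (-s)) b ha (hw.comp continuous_neg) hv ε (-t)
  rw [NS.shiftPath_neg] at h
  rw [NS.psiSol_neg] at h
  simp only [NS.yStat_neg] at h
  rw [show -a * -t = a * t by ring] at h
  exact h

end NSaux

/-- **Exact exponential separation from the stationary orbit of the noisy saddle.**
For parameters `a₁, a₂ > 0`, `b₁, b₂ : ℝ`, paths `w¹, w²` of linear growth, all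
`ε₁, ε₂ : ℝ` and every `t : ℝ`, the solution starting at the perturbed point
`(x̃ + ε₁, ỹ + ε₂)` separates from the stationary orbit exactly exponentially. -/
theorem noisy_saddle_exact_exponential_separation
    (a₁ a₂ : ℝ) (ha₁ : 0 < a₁) (ha₂ : 0 < a₂) (b₁ b₂ : ℝ)
    (w₁ w₂ : ℝ → ℝ) (hw₁ : Continuous w₁) (hw₁0 : w₁ 0 = 0)
    (hw₂ : Continuous w₂) (hw₂0 : w₂ 0 = 0)
    (C₁ : ℝ) (hC₁ : 0 ≤ C₁) (hg₁ : ∀ s : ℝ, |w₁ s| ≤ C₁ * (1 + |s|))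
    (C₂ : ℝ) (hC₂ : 0 ≤ C₂) (hg₂ : ∀ s : ℝ, |w₂ s| ≤ C₂ * (1 + |s|))
    (ε₁ ε₂ : ℝ) (t : ℝ) :
    ((phiSol a₁ b₁ t w₁ (xStat a₁ b₁ w₁ + ε₁),
        psiSol a₂ b₂ t w₂ (yStat a₂ b₂ w₂ + ε₂)) : ℝ × ℝ) -
        (xStat a₁ b₁ (shiftPath t w₁), yStat a₂ b₂ (shiftPath t w₂)) =
      (ε₁ * Real.exp (a₁ * t), ε₂ * Real.exp (-a₂ * t)) := by
  rw [Prod.mk_sub_mk, Prod.mk.injEq]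
  exact ⟨NS.phi_key b₁ ha₁ hw₁ hg₁ ε₁ t, NS.psi_key b₂ ha₂ hw₂ hg₂ ε₂ t⟩
end

section
/- Consider the noisy saddle with parameters a₁, a₂ > 0 and b₁, b₂ ∈ ℝ, driven by paths w¹, w² of linear growth, and let ε₁, ε₂ ∈ ℝ. If ε₁ ≠ 0 then the Euclidean distance ‖( φ_{a₁,b₁}(t, w¹, x̃ + ε₁), ψ_{a₂,b₂}(t, w², ỹ + ε₂) ) − ( x̃(θ_t w¹), ỹ(θ_t w²) )‖ is bounded below by |ε₁| e^{a₁ t} and tends to +∞ as t → +∞; if ε₂ ≠ 0 then this distance is bounded below by |ε₂| e^{−a₂ t} and tends to +∞ as t → −∞. -/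
open MeasureTheory Filter Topology

/-- The Euclidean distance at time `t` between the solution of the noisy saddle starting
at the perturbed point `(x̃ + ε₁, ỹ + ε₂)` and the stationary orbit. -/
noncomputable def saddleDist (a₁ b₁ a₂ b₂ : ℝ) (w₁ w₂ : ℝ → ℝ) (ε₁ ε₂ t : ℝ) : ℝ :=
  Real.sqrt
    ((phiSol a₁ b₁ t w₁ (xStat a₁ b₁ w₁ + ε₁) - xStat a₁ b₁ (shiftPath t w₁)) ^ 2 +
      (psiSol a₂ b₂ t w₂ (yStat a₂ b₂ w₂ + ε₂) - yStat a₂ b₂ (shiftPath t w₂)) ^ 2)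

/-!
Both pathwise solution operators are affine in the initial value, with linear part `e^{a t}`
resp. `e^{-a t}`, and they carry the stationary orbit to itself: `φ(t, w, x̃(w)) = x̃(θ_t w)`.
After the substitution `u = t + s`, the latter identity is the splitting
`∫₀^∞ = ∫₀^t + ∫_t^∞` of the integral defining `x̃(w)`; the contracting coordinate reduces to
the expanding one by the time reversal `s ↦ -s`. So the two coordinates of the difference to
the stationary orbit are exactly `ε₁ e^{a₁ t}` and `ε₂ e^{-a₂ t}`.
-/

open Set Real Asymptotics

def HasLinearGrowth (w : ℝ → ℝ) : Prop :=
  ∃ C, ∀ s, |w s| ≤ C * (1 + |s|)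

namespace HasLinearGrowth

variable {w : ℝ → ℝ}

lemma comp_neg (hw : HasLinearGrowth w) : HasLinearGrowth fun s => w (-s) := by
  obtain ⟨C, hC⟩ := hw
  exact ⟨C, fun s => by simpa only [abs_neg] using hC (-s)⟩

lemma nonneg_of_bound {C : ℝ} (hC : ∀ s, |w s| ≤ C * (1 + |s|)) : 0 ≤ C := by
  simpa using (abs_nonneg _).trans (hC 0)

lemma comp_const_add (hw : HasLinearGrowth w) (t : ℝ) : HasLinearGrowth fun s => w (t + s) := by
  obtain ⟨C, hC⟩ := hw
  have hC0 := nonneg_of_bound hC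
  refine ⟨C * (1 + |t|), fun s => ?_⟩
  calc |w (t + s)| ≤ C * (1 + |t + s|) := hC _
    _ ≤ C * ((1 + |t|) * (1 + |s|)) := by
        gcongr
        nlinarith [abs_add_le t s, abs_nonneg t, abs_nonneg s]
    _ = C * (1 + |t|) * (1 + |s|) := by ring

lemma isBigO_exp_mul (hw : HasLinearGrowth w) {b : ℝ} (hb : 0 < b) :
    w =O[atTop] fun s => exp (b * s) := by
  obtain ⟨C, hC⟩ := hw
  have hlin : w =O[atTop] fun s => s ^ 1 := by
    refine IsBigO.of_bound (2 * C) ?_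
    filter_upwards [eventually_ge_atTop 1] with s hs
    have hs0 : 0 < s := by linarith
    have hbound := hC s
    rw [abs_of_pos hs0] at hbound
    rw [Real.norm_eq_abs, Real.norm_eq_abs, pow_one, abs_of_pos hs0]
    nlinarith [nonneg_of_bound hC]
  exact hlin.trans (isLittleO_pow_exp_pos_mul_atTop 1 hb).isBigO

lemma integrableOn_exp_neg_mul (hw : HasLinearGrowth w) (hc : Continuous w) {a : ℝ}
    (ha : 0 < a) (c : ℝ) : IntegrableOn (fun s => exp (-a * s) * w s) (Ioi c) := by
  refine integrable_of_isBigO_exp_neg (half_pos ha) (by fun_prop) ?_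
  refine ((isBigO_refl (fun s => exp (-a * s)) atTop).mul
    (hw.isBigO_exp_mul (half_pos ha))).congr_right fun s => ?_
  rw [← exp_add]
  ring_nf

end HasLinearGrowth

lemma integral_Ioi_zero_comp_add_left {E : Type*} [NormedAddCommGroup E] [NormedSpace ℝ E]
    (f : ℝ → E) (t : ℝ) : ∫ s in Ioi 0, f (t + s) = ∫ u in Ioi t, f u := by
  simpa using (measurePreserving_add_left (volume : Measure ℝ) t).setIntegral_preimage_emb
    (MeasurableEquiv.addLeft t).measurableEmbedding f (Ioi t)

section StationaryOrbit

variable {a : ℝ} (b : ℝ) {w : ℝ → ℝ}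

lemma phiSol_add (t x ε : ℝ) : phiSol a b t w (x + ε) = phiSol a b t w x + ε * exp (a * t) := by
  unfold phiSol
  ring

lemma psiSol_add (t y ε : ℝ) : psiSol a b t w (y + ε) = psiSol a b t w y + ε * exp (-a * t) := by
  unfold psiSol
  ring

theorem phiSol_xStat (ha : 0 < a) (hw : HasLinearGrowth w) (hc : Continuous w) (t : ℝ) :
    phiSol a b t w (xStat a b w) = xStat a b (shiftPath t w) := by
  have hf : ∀ c, IntegrableOn (fun s => exp (-a * s) * w s) (Ioi c) :=
    hw.integrableOn_exp_neg_mul hc ha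
  have htranslate : ∫ s in Ioi 0, exp (-a * s) * w (t + s)
      = exp (a * t) * ∫ u in Ioi t, exp (-a * u) * w u := by
    rw [← integral_const_mul, ← integral_Ioi_zero_comp_add_left _ t]
    refine setIntegral_congr_fun measurableSet_Ioi fun s _ => ?_
    rw [← mul_assoc, ← exp_add]
    ring_nf
  have hshift : ∫ s in Ioi 0, exp (-a * s) * shiftPath t w s
      = exp (a * t) * (∫ u in Ioi t, exp (-a * u) * w u) - w t / a := by
    simp only [shiftPath, mul_sub]
    rw [integral_sub ((hw.comp_const_add t).integrableOn_exp_neg_mul (by fun_prop) ha 0)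
      ((exp_neg_integrableOn_Ioi 0 ha).mul_const _), htranslate, integral_mul_const,
      integral_exp_mul_Ioi (neg_neg_of_pos ha) 0, mul_zero, exp_zero, neg_div_neg_eq]
    ring
  have hsplit := intervalIntegral.integral_interval_add_Ioi (hf 0) (hf t)
  have hcancel : a * (w t / a) = w t := mul_div_cancel₀ _ ha.ne'
  rw [phiSol, xStat, xStat, hshift]
  linear_combination (a * b * exp (a * t)) * hsplit - b * hcancel

lemma yStat_eq_xStat_comp_neg (w : ℝ → ℝ) : yStat a b w = xStat a b fun s => w (-s) := by
  rw [yStat, xStat, ← integral_Iic_eq_integral_Iio]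
  simpa [neg_mul] using congrArg (-(a * b) * ·)
    (integral_comp_neg_Ioi (0 : ℝ) fun s => exp (a * s) * w s).symm

lemma psiSol_eq_phiSol_comp_neg (t y : ℝ) :
    psiSol a b t w y = phiSol a b (-t) (fun s => w (-s)) y := by
  have hreverse : ∫ s in (0 : ℝ)..(-t), exp (-a * s) * w (-s)
      = -∫ s in (0 : ℝ)..t, exp (a * s) * w s := by
    have h := intervalIntegral.integral_comp_neg (a := (0 : ℝ)) (b := -t)
      fun s => exp (a * s) * w s
    simp only [neg_neg, neg_zero, mul_neg, ← neg_mul] at h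
    rw [h, intervalIntegral.integral_symm]
  rw [psiSol, phiSol, hreverse]
  simp only [neg_neg, mul_neg, neg_mul]
  ring

lemma shiftPath_comp_neg (t : ℝ) :
    shiftPath (-t) (fun s => w (-s)) = fun s => shiftPath t w (-s) := by
  ext s
  simp only [shiftPath, neg_add_rev, neg_neg, add_comm]

theorem psiSol_yStat (ha : 0 < a) (hw : HasLinearGrowth w) (hc : Continuous w) (t : ℝ) :
    psiSol a b t w (yStat a b w) = yStat a b (shiftPath t w) := by
  rw [psiSol_eq_phiSol_comp_neg, yStat_eq_xStat_comp_neg, yStat_eq_xStat_comp_neg,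
    phiSol_xStat b ha hw.comp_neg (by fun_prop), shiftPath_comp_neg]

end StationaryOrbit

lemma abs_le_sqrt_sq_add_sq_left (x y : ℝ) : |x| ≤ √(x ^ 2 + y ^ 2) :=
  abs_le_sqrt (le_add_of_nonneg_right (sq_nonneg y))

lemma abs_le_sqrt_sq_add_sq_right (x y : ℝ) : |y| ≤ √(x ^ 2 + y ^ 2) :=
  abs_le_sqrt (le_add_of_nonneg_left (sq_nonneg x))

theorem noisy_saddle_exponential_dichotomy_general
    (a₁ a₂ : ℝ) (ha₁ : 0 < a₁) (ha₂ : 0 < a₂) (b₁ b₂ : ℝ)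
    (w₁ w₂ : ℝ → ℝ) (hw₁ : Continuous w₁)
    (hw₂ : Continuous w₂)
    (C₁ : ℝ) (hg₁ : ∀ s : ℝ, |w₁ s| ≤ C₁ * (1 + |s|))
    (C₂ : ℝ) (hg₂ : ∀ s : ℝ, |w₂ s| ≤ C₂ * (1 + |s|))
    (ε₁ ε₂ : ℝ) :
    (ε₁ ≠ 0 →
      (∀ t : ℝ, |ε₁| * Real.exp (a₁ * t) ≤ saddleDist a₁ b₁ a₂ b₂ w₁ w₂ ε₁ ε₂ t) ∧
        Tendsto (fun t => saddleDist a₁ b₁ a₂ b₂ w₁ w₂ ε₁ ε₂ t) atTop atTop) ∧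
    (ε₂ ≠ 0 →
      (∀ t : ℝ, |ε₂| * Real.exp (-a₂ * t) ≤ saddleDist a₁ b₁ a₂ b₂ w₁ w₂ ε₁ ε₂ t) ∧
        Tendsto (fun t => saddleDist a₁ b₁ a₂ b₂ w₁ w₂ ε₁ ε₂ t) atBot atTop) := by
  have hdist : ∀ t, saddleDist a₁ b₁ a₂ b₂ w₁ w₂ ε₁ ε₂ t
      = √((ε₁ * exp (a₁ * t)) ^ 2 + (ε₂ * exp (-a₂ * t)) ^ 2) := fun t => by
    rw [saddleDist, phiSol_add, psiSol_add, phiSol_xStat b₁ ha₁ ⟨C₁, hg₁⟩ hw₁,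
      psiSol_yStat b₂ ha₂ ⟨C₂, hg₂⟩ hw₂, add_sub_cancel_left, add_sub_cancel_left]
  have hlower₁ : ∀ t, |ε₁| * exp (a₁ * t) ≤ saddleDist a₁ b₁ a₂ b₂ w₁ w₂ ε₁ ε₂ t := fun t => by
    simpa only [hdist, abs_mul, abs_of_pos (exp_pos _)] using
      abs_le_sqrt_sq_add_sq_left (ε₁ * exp (a₁ * t)) (ε₂ * exp (-a₂ * t))
  have hlower₂ : ∀ t, |ε₂| * exp (-a₂ * t) ≤ saddleDist a₁ b₁ a₂ b₂ w₁ w₂ ε₁ ε₂ t := fun t => by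
    simpa only [hdist, abs_mul, abs_of_pos (exp_pos _)] using
      abs_le_sqrt_sq_add_sq_right (ε₁ * exp (a₁ * t)) (ε₂ * exp (-a₂ * t))
  have hexp₁ : Tendsto (fun t => exp (a₁ * t)) atTop atTop :=
    tendsto_exp_atTop.comp (tendsto_id.const_mul_atTop ha₁)
  have hexp₂ : Tendsto (fun t => exp (-a₂ * t)) atBot atTop :=
    tendsto_exp_atTop.comp (tendsto_id.const_mul_atBot_of_neg (neg_neg_of_pos ha₂))
  exact ⟨fun hε => ⟨hlower₁, tendsto_atTop_mono hlower₁ (hexp₁.const_mul_atTop (abs_pos.2 hε))⟩,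
    fun hε => ⟨hlower₂, tendsto_atTop_mono hlower₂ (hexp₂.const_mul_atTop (abs_pos.2 hε))⟩⟩

/-- **Exponential dichotomy for the noisy saddle.** If `ε₁ ≠ 0` the Euclidean distance
to the stationary orbit is bounded below by `|ε₁| e^{a₁ t}` and tends to `+∞` as
`t → +∞`; if `ε₂ ≠ 0` it is bounded below by `|ε₂| e^{-a₂ t}` and tends to `+∞`
as `t → -∞`. -/
theorem noisy_saddle_exponential_dichotomy
    (a₁ a₂ : ℝ) (ha₁ : 0 < a₁) (ha₂ : 0 < a₂) (b₁ b₂ : ℝ)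
    (w₁ w₂ : ℝ → ℝ) (hw₁ : Continuous w₁) (hw₁0 : w₁ 0 = 0)
    (hw₂ : Continuous w₂) (hw₂0 : w₂ 0 = 0)
    (C₁ : ℝ) (hC₁ : 0 ≤ C₁) (hg₁ : ∀ s : ℝ, |w₁ s| ≤ C₁ * (1 + |s|))
    (C₂ : ℝ) (hC₂ : 0 ≤ C₂) (hg₂ : ∀ s : ℝ, |w₂ s| ≤ C₂ * (1 + |s|))
    (ε₁ ε₂ : ℝ) :
    (ε₁ ≠ 0 →
      (∀ t : ℝ, |ε₁| * Real.exp (a₁ * t) ≤ saddleDist a₁ b₁ a₂ b₂ w₁ w₂ ε₁ ε₂ t) ∧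
        Tendsto (fun t => saddleDist a₁ b₁ a₂ b₂ w₁ w₂ ε₁ ε₂ t) atTop atTop) ∧
    (ε₂ ≠ 0 →
      (∀ t : ℝ, |ε₂| * Real.exp (-a₂ * t) ≤ saddleDist a₁ b₁ a₂ b₂ w₁ w₂ ε₁ ε₂ t) ∧
        Tendsto (fun t => saddleDist a₁ b₁ a₂ b₂ w₁ w₂ ε₁ ε₂ t) atBot atTop) :=
  noisy_saddle_exponential_dichotomy_general a₁ a₂ ha₁ ha₂ b₁ b₂ w₁ w₂ hw₁ hw₂ C₁ hg₁ C₂ hg₂ ε₁ ε₂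
end

section
/- Consider the noisy saddle with parameters a₁, a₂ > 0 and b₁, b₂ ∈ ℝ, driven by paths w¹, w² of linear growth. The stationary orbit is the unique bounded solution: if (x₀, y₀) ∈ ℝ² is such that sup_{t ∈ ℝ} |φ_{a₁,b₁}(t, w¹, x₀)| < ∞ and sup_{t ∈ ℝ} |ψ_{a₂,b₂}(t, w², y₀)| < ∞, then x₀ = x̃_{a₁,b₁}(w¹) and y₀ = ỹ_{a₂,b₂}(w²). -/
open MeasureTheory Filter Topology

lemma decay1 {a : ℝ} (ha : 0 < a) :
    Tendsto (fun t : ℝ => Real.exp (-a * t)) atTop (𝓝 0) :=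
  Real.tendsto_exp_atBot.comp (tendsto_id.const_mul_atTop_of_neg (neg_neg_iff_pos.2 ha))

lemma decay2 {a : ℝ} (ha : 0 < a) :
    Tendsto (fun t : ℝ => (1 + t) * Real.exp (-a * t)) atTop (𝓝 0) := by
  have h2 : Tendsto (fun t : ℝ => t * Real.exp (-a * t)) atTop (𝓝 0) := by
    have h := ((Real.tendsto_pow_mul_exp_neg_atTop_nhds_zero 1).comp
      (tendsto_id.const_mul_atTop ha)).const_mul (1 / a)
    rw [mul_zero] at h
    refine h.congr fun t => ?_
    simp only [Function.comp_apply, pow_one, id_eq]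
    field_simp
  have := (decay1 ha).add h2
  rw [add_zero] at this
  refine this.congr fun t => by ring
lemma coreInt {a C : ℝ} (ha : 0 < a) (hC : 0 ≤ C) {w : ℝ → ℝ} (hw : Continuous w)
    (hg : ∀ s : ℝ, |w s| ≤ C * (1 + |s|)) :
    IntegrableOn (fun s => Real.exp (-a * s) * w s) (Set.Ioi (0 : ℝ)) := by
  refine integrable_of_isBigO_exp_neg (b := a / 2) (half_pos ha)
    ((Real.continuous_exp.comp (by fun_prop)).mul hw).continuousOn ?_
  rw [Asymptotics.isBigO_iff]
  refine ⟨C, ?_⟩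
  have h1 : ∀ᶠ s : ℝ in atTop, (1 + s) * Real.exp (-(a / 2) * s) < 1 :=
    (decay2 (half_pos ha)).eventually_lt_const one_pos
  filter_upwards [h1, eventually_ge_atTop (0 : ℝ)] with s hs1 hs0
  have he : Real.exp (-a * s) = Real.exp (-(a / 2) * s) * Real.exp (-(a / 2) * s) := by
    rw [← Real.exp_add]; ring_nf
  have hws := hg s
  rw [abs_of_nonneg hs0] at hws
  have hpos := Real.exp_pos (-(a / 2) * s)
  calc ‖Real.exp (-a * s) * w s‖ = Real.exp (-a * s) * |w s| := by
        rw [Real.norm_eq_abs, abs_mul, abs_of_pos (Real.exp_pos _)]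
    _ ≤ Real.exp (-a * s) * (C * (1 + s)) :=
        mul_le_mul_of_nonneg_left hws (Real.exp_pos _).le
    _ = C * ((1 + s) * Real.exp (-(a / 2) * s)) * Real.exp (-(a / 2) * s) := by
        rw [he]; ring
    _ ≤ C * 1 * Real.exp (-(a / 2) * s) := by
        apply mul_le_mul_of_nonneg_right _ hpos.le
        exact mul_le_mul_of_nonneg_left hs1.le hC
    _ ≤ C * ‖Real.exp (-(a / 2) * s)‖ := by
        rw [Real.norm_eq_abs, abs_of_pos hpos, mul_one]

lemma core {a C : ℝ} (b : ℝ) (ha : 0 < a) (hC : 0 ≤ C) {w : ℝ → ℝ} (hw : Continuous w)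
    (hg : ∀ s : ℝ, |w s| ≤ C * (1 + |s|)) (x₀ M : ℝ)
    (hM : ∀ t : ℝ, |phiSol a b t w x₀| ≤ M) : x₀ = xStat a b w := by
  have hint := coreInt ha hC hw hg
  set g : ℝ → ℝ := fun t => x₀ + a * b * ∫ s in (0 : ℝ)..t, Real.exp (-a * s) * w s with hg'
  have hA : Tendsto g atTop
      (𝓝 (x₀ + a * b * ∫ s in Set.Ioi (0 : ℝ), Real.exp (-a * s) * w s)) :=
    tendsto_const_nhds.add
      ((intervalIntegral_tendsto_integral_Ioi 0 hint tendsto_id).const_mul _)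
  have hB : Tendsto g atTop (𝓝 0) := by
    refine squeeze_zero_norm' (a := fun t => (M + |b| * C * (1 + t)) * Real.exp (-a * t)) ?_ ?_
    · filter_upwards [eventually_ge_atTop (0 : ℝ)] with t ht
      have hgt : g t * Real.exp (a * t) = phiSol a b t w x₀ - b * w t := by
        rw [hg']; simp only [phiSol]; ring
      have hginv : g t = (phiSol a b t w x₀ - b * w t) * Real.exp (-a * t) := by
        rw [← hgt]
        rw [mul_assoc, ← Real.exp_add]
        simp
      rw [Real.norm_eq_abs, hginv, abs_mul, abs_of_pos (Real.exp_pos _)]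
      apply mul_le_mul_of_nonneg_right _ (Real.exp_pos _).le
      have h1 := hM t
      have h2 := hg t
      rw [abs_of_nonneg ht] at h2
      calc |phiSol a b t w x₀ - b * w t| ≤ |phiSol a b t w x₀| + |b * w t| := abs_sub _ _
        _ ≤ M + |b| * (C * (1 + t)) := by
            rw [abs_mul]
            exact add_le_add h1 (mul_le_mul_of_nonneg_left h2 (abs_nonneg b))
        _ = M + |b| * C * (1 + t) := by ring
    · have := (decay1 ha).const_mul M |>.add (((decay2 ha)).const_mul (|b| * C))
      rw [mul_zero, mul_zero, add_zero] at this
      refine this.congr fun t => by ring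
  have h0 := tendsto_nhds_unique hA hB
  rw [xStat]
  linarith

lemma phi_neg (a b t : ℝ) (w : ℝ → ℝ) (y : ℝ) :
    phiSol a b t (fun u => w (-u)) y = psiSol a b (-t) w y := by
  simp only [phiSol, psiSol, neg_neg, mul_neg]
  have h : (∫ s in (0 : ℝ)..t, Real.exp (-a * s) * w (-s))
      = ∫ s in (-t)..(0 : ℝ), Real.exp (a * s) * w s := by
    have h0 := intervalIntegral.integral_comp_neg (a := (0 : ℝ)) (b := t)
      (f := fun x => Real.exp (a * x) * w x)
    simpa [neg_mul, mul_neg] using h0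
  rw [h, intervalIntegral.integral_symm]
  rw [mul_neg, ← sub_eq_add_neg]
  simp only [neg_mul, neg_neg]

/-- **The stationary orbit is the unique bounded solution of the noisy saddle.**
If both components of the solution through `(x₀, y₀)` are bounded over all of `ℝ`, then
`(x₀, y₀)` is the stationary orbit `(x̃_{a₁,b₁}(w¹), ỹ_{a₂,b₂}(w²))`. -/
theorem noisy_saddle_unique_bounded_solution
    (a₁ a₂ : ℝ) (ha₁ : 0 < a₁) (ha₂ : 0 < a₂) (b₁ b₂ : ℝ)
    (w₁ w₂ : ℝ → ℝ) (hw₁ : Continuous w₁) (hw₁0 : w₁ 0 = 0)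
    (hw₂ : Continuous w₂) (hw₂0 : w₂ 0 = 0)
    (C₁ : ℝ) (hC₁ : 0 ≤ C₁) (hg₁ : ∀ s : ℝ, |w₁ s| ≤ C₁ * (1 + |s|))
    (C₂ : ℝ) (hC₂ : 0 ≤ C₂) (hg₂ : ∀ s : ℝ, |w₂ s| ≤ C₂ * (1 + |s|))
    (x₀ y₀ : ℝ)
    (hxbdd : ∃ M : ℝ, ∀ t : ℝ, |phiSol a₁ b₁ t w₁ x₀| ≤ M)
    (hybdd : ∃ M : ℝ, ∀ t : ℝ, |psiSol a₂ b₂ t w₂ y₀| ≤ M) :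
    x₀ = xStat a₁ b₁ w₁ ∧ y₀ = yStat a₂ b₂ w₂ := by
  obtain ⟨M₁, hM₁⟩ := hxbdd
  obtain ⟨M₂, hM₂⟩ := hybdd
  constructor
  · exact core b₁ ha₁ hC₁ hw₁ hg₁ x₀ M₁ hM₁
  · have hwc : Continuous (fun u : ℝ => w₂ (-u)) := hw₂.comp continuous_neg
    have hy : y₀ = xStat a₂ b₂ (fun u => w₂ (-u)) := by
      refine core (w := fun u => w₂ (-u)) b₂ ha₂ hC₂ hwc (fun s => ?_) y₀ M₂ (fun t => ?_)
      · simpa [abs_neg] using hg₂ (-s)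
      · rw [phi_neg]; exact hM₂ (-t)
    rw [hy, xStat, yStat]
    congr 1
    have h1 := integral_comp_neg_Ioi (c := (0 : ℝ)) (f := fun x : ℝ => Real.exp (a₂ * x) * w₂ x)
    simp only [neg_zero] at h1
    rw [MeasureTheory.integral_Iic_eq_integral_Iio] at h1
    rw [← h1]
    congr 1
    funext s
    rw [neg_mul, mul_neg]
end

section
/- Let p ∈ (0, 1], let n ≥ 1, and let α₁, …, αₙ be nonzero reals and β₁, …, βₙ reals. Define f : ℝ → ℝ by f(x) = Σ_{i=1}^{n} |αᵢ x + βᵢ|^{p}. Then f is differentiable at every x ∉ { −βᵢ/αᵢ : 1 ≤ i ≤ n }, and f is not differentiable at each point x = −βⱼ/αⱼ (1 ≤ j ≤ n). -/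
open MeasureTheory Filter Topology

/-!
Away from the roots of the affine maps `αᵢ x + βᵢ`, every summand is a power of a smooth nonzero
function. At a root `x₀`, the summands vanishing there add up to `c |x - x₀| ^ p` with
`c = Σ |αᵢ| ^ p > 0`, and the remaining ones are differentiable, so everything reduces to the
non-differentiability of `|x| ^ p` at `0`. Since `|x| ≤ |x| ^ p` for `|x| ≤ 1` and `p ≤ 1`, the
difference quotients of `|x| ^ p` at `0` are `≥ 1` from the right and `≤ -1` from the left.
-/

open Finset

theorem Real.not_differentiableAt_abs_rpow_zero {p : ℝ} (hp0 : 0 < p) (hp1 : p ≤ 1) :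
    ¬ DifferentiableAt ℝ (fun y : ℝ => |y| ^ p) 0 := by
  intro h
  have hslope := hasDerivAt_iff_tendsto_slope.1 h.hasDerivAt
  have hslope_eq : ∀ y, slope (fun y : ℝ => |y| ^ p) 0 y = |y| ^ p / y := fun y => by
    rw [slope_def_field, abs_zero, Real.zero_rpow hp0.ne', sub_zero, sub_zero]
  have hright : ∀ᶠ y in 𝓝[>] (0 : ℝ), 1 ≤ slope (fun y : ℝ => |y| ^ p) 0 y := by
    filter_upwards [Ioo_mem_nhdsGT zero_lt_one] with y ⟨hy0, hy1⟩
    rw [hslope_eq, le_div_iff₀ hy0, one_mul]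
    simpa [abs_of_pos hy0] using
      Real.self_le_rpow_of_le_one (abs_nonneg y) (by rw [abs_of_pos hy0]; exact hy1.le) hp1
  have hleft : ∀ᶠ y in 𝓝[<] (0 : ℝ), slope (fun y : ℝ => |y| ^ p) 0 y ≤ -1 := by
    filter_upwards [Ioo_mem_nhdsLT neg_one_lt_zero] with y ⟨hy1, hy0⟩
    rw [hslope_eq, div_le_iff_of_neg hy0, neg_one_mul]
    simpa [abs_of_neg hy0] using
      Real.self_le_rpow_of_le_one (abs_nonneg y) (by rw [abs_of_neg hy0]; linarith) hp1
  have hge := ge_of_tendsto (hslope.mono_left (nhdsGT_le_nhdsNE 0)) hright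
  have hle := le_of_tendsto (hslope.mono_left (nhdsLT_le_nhdsNE 0)) hleft
  linarith

theorem not_differentiableAt_const_mul_abs_sub_rpow {p c : ℝ} (hp0 : 0 < p) (hp1 : p ≤ 1)
    (hc : c ≠ 0) (x₀ : ℝ) : ¬ DifferentiableAt ℝ (fun y : ℝ => c * |y - x₀| ^ p) x₀ := by
  intro h
  have hshift : DifferentiableAt ℝ (fun y : ℝ => |y - x₀| ^ p) x₀ := by
    simpa [hc] using h.const_mul c⁻¹
  rw [differentiableAt_comp_sub_const (f := fun y : ℝ => |y| ^ p), sub_self] at hshift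
  exact Real.not_differentiableAt_abs_rpow_zero hp0 hp1 hshift

theorem differentiableAt_abs_affine_rpow {a b x : ℝ} (p : ℝ) (h : a * x + b ≠ 0) :
    DifferentiableAt ℝ (fun y : ℝ => |a * y + b| ^ p) x :=
  (((differentiableAt_id.const_mul a).add_const b).abs h).rpow_const (Or.inl (abs_ne_zero.2 h))

theorem abs_affine_rpow_eq_of_root {a b x₀ : ℝ} (p : ℝ) (h : a * x₀ + b = 0) (y : ℝ) :
    |a * y + b| ^ p = |a| ^ p * |y - x₀| ^ p := by
  rw [← Real.mul_rpow (abs_nonneg _) (abs_nonneg _), ← abs_mul]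
  congr 2
  linear_combination h

section AffineSum

variable {ι : Type*} (s : Finset ι) (a b : ι → ℝ)

theorem differentiableAt_sum_abs_affine_rpow (p : ℝ) {x : ℝ} (h : ∀ i ∈ s, a i * x + b i ≠ 0) :
    DifferentiableAt ℝ (fun y : ℝ => ∑ i ∈ s, |a i * y + b i| ^ p) x :=
  DifferentiableAt.fun_sum fun i hi => differentiableAt_abs_affine_rpow p (h i hi)

theorem not_differentiableAt_sum_abs_affine_rpow {p : ℝ} (hp0 : 0 < p) (hp1 : p ≤ 1)
    {x₀ : ℝ} {j : ι} (hj : j ∈ s) (haj : a j ≠ 0) (hroot : a j * x₀ + b j = 0) :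
    ¬ DifferentiableAt ℝ (fun y : ℝ => ∑ i ∈ s, |a i * y + b i| ^ p) x₀ := by
  classical
  set roots := s.filter (fun i => a i * x₀ + b i = 0)
  have hc : 0 < ∑ i ∈ roots, |a i| ^ p :=
    sum_pos' (fun i _ => by positivity)
      ⟨j, mem_filter.2 ⟨hj, hroot⟩, Real.rpow_pos_of_pos (abs_pos.2 haj) p⟩
  have hsplit : (fun y : ℝ => ∑ i ∈ s, |a i * y + b i| ^ p) = fun y =>
      (∑ i ∈ s.filter (fun i => a i * x₀ + b i ≠ 0), |a i * y + b i| ^ p) +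
        (∑ i ∈ roots, |a i| ^ p) * |y - x₀| ^ p := by
    funext y
    rw [← sum_filter_not_add_sum_filter s (fun i => a i * x₀ + b i = 0), sum_mul]
    exact congrArg _ (sum_congr rfl fun i hi => abs_affine_rpow_eq_of_root p (mem_filter.1 hi).2 y)
  rw [hsplit, (differentiableAt_sum_abs_affine_rpow _ a b p
    fun i hi => (mem_filter.1 hi).2).fun_add_iff_right]
  exact not_differentiableAt_const_mul_abs_sub_rpow hp0 hp1 hc.ne' x₀

end AffineSum

theorem sum_abs_rpow_differentiability_general
    (p : ℝ) (hp0 : 0 < p) (hp1 : p ≤ 1) (n : ℕ)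
    (α β : Fin n → ℝ) (hα : ∀ i, α i ≠ 0) :
    (∀ x : ℝ, x ∉ Set.range (fun i => -β i / α i) →
      DifferentiableAt ℝ (fun y : ℝ => ∑ i, |α i * y + β i| ^ p) x) ∧
    (∀ j : Fin n,
      ¬ DifferentiableAt ℝ (fun y : ℝ => ∑ i, |α i * y + β i| ^ p) (-β j / α j)) := by
  refine ⟨fun x hx => differentiableAt_sum_abs_affine_rpow _ α β p fun i _ hroot => hx ⟨i, ?_⟩,
    fun j => not_differentiableAt_sum_abs_affine_rpow _ α β hp0 hp1 (mem_univ j) (hα j) ?_⟩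
  · field_simp [hα i]
    linarith
  · field_simp [hα j]
    ring

/-- **Singularities of p-(quasi)norm Lagrangian descriptor sums.** For `p ∈ (0, 1]`,
`n ≥ 1`, nonzero reals `α₁, …, αₙ` and reals `β₁, …, βₙ`, the function
`f(x) = Σᵢ |αᵢ x + βᵢ|^p` is differentiable at every `x ∉ {-βᵢ/αᵢ}` and is not
differentiable at each point `x = -βⱼ/αⱼ`. -/
theorem sum_abs_rpow_differentiability
    (p : ℝ) (hp0 : 0 < p) (hp1 : p ≤ 1) (n : ℕ) (hn : 1 ≤ n)
    (α β : Fin n → ℝ) (hα : ∀ i, α i ≠ 0) :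
    (∀ x : ℝ, x ∉ Set.range (fun i => -β i / α i) →
      DifferentiableAt ℝ (fun y : ℝ => ∑ i, |α i * y + β i| ^ p) x) ∧
    (∀ j : Fin n,
      ¬ DifferentiableAt ℝ (fun y : ℝ => ∑ i, |α i * y + β i| ^ p) (-β j / α j)) :=
  sum_abs_rpow_differentiability_general p hp0 hp1 n α β hα
end

section
/- Fix a > 0, b ∈ ℝ, a step Δt > 0, and let w be a path of linear growth. With g(t) = b w(t) + a b e^{a t} ∫₀ᵗ e^{−a s} w(s) ds and tᵢ = i Δt, the singular points sᵢ = −( g(t_{i+1}) − g(t_i) ) / ( e^{a t_{i+1}} − e^{a t_i} ) of the stochastic Lagrangian descriptor converge, as i → +∞, to the stationary-orbit coordinate: lim_{i → ∞} sᵢ = x̃_{a,b}(w) = −a b ∫₀^∞ e^{−a s} w(s) ds. Hence as the integration time τ = N Δt tends to infinity, the sharpest singular feature of the x-component of the descriptor converges to the x-coordinate of the stationary orbit of the noisy saddle. -/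
open MeasureTheory Filter Topology

/-- The path-dependent part `g(t) = b w(t) + a b e^{a t} ∫₀ᵗ e^{-a s} w(s) ds` of the
pathwise solution of `dX = aX dt + b dW`. -/
noncomputable def gPart (a b : ℝ) (w : ℝ → ℝ) (t : ℝ) : ℝ :=
  b * w t + a * b * Real.exp (a * t) * ∫ s in (0 : ℝ)..t, Real.exp (-a * s) * w s

/-- The singular point of the `i`-th increment of the stochastic Lagrangian descriptor
on the uniform grid `tᵢ = i Δt`:
`sᵢ = -(g(t_{i+1}) - g(tᵢ)) / (e^{a t_{i+1}} - e^{a tᵢ})`. -/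
noncomputable def singPt (a b : ℝ) (w : ℝ → ℝ) (Δt : ℝ) (i : ℤ) : ℝ :=
  -(gPart a b w (((i : ℝ) + 1) * Δt) - gPart a b w ((i : ℝ) * Δt)) /
    (Real.exp (a * (((i : ℝ) + 1) * Δt)) - Real.exp (a * ((i : ℝ) * Δt)))

set_option maxHeartbeats 1000000 in
/-- **The singular features of the stochastic Lagrangian descriptor converge to the
stationary orbit.** For `a > 0`, `b : ℝ`, a step `Δt > 0` and a path `w` of linear
growth, the singular points `sᵢ` of the `x`-component of the descriptor converge, as
`i → +∞`, to the stationary-orbit coordinate `x̃_{a,b}(w)`. -/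
theorem singPt_tendsto_xStat
    (a : ℝ) (ha : 0 < a) (b : ℝ) (Δt : ℝ) (hΔt : 0 < Δt)
    (w : ℝ → ℝ) (hw : Continuous w) (hw0 : w 0 = 0)
    (C : ℝ) (hC : 0 ≤ C) (hgrowth : ∀ s : ℝ, |w s| ≤ C * (1 + |s|)) :
    Tendsto (fun i : ℕ => singPt a b w Δt (i : ℤ)) atTop (𝓝 (xStat a b w)) := by
  have ha2 : 0 < a / 2 := by linarith
  set f : ℝ → ℝ := fun s => Real.exp (-a * s) * w s with hfdef
  have hcont : Continuous f := (Real.continuous_exp.comp (by continuity)).mul hw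
  -- basic exponential limits
  have e1 : Tendsto (fun x : ℝ => Real.exp (-(a / 2) * x)) atTop (𝓝 0) :=
    Real.tendsto_exp_atBot.comp (tendsto_id.const_mul_atTop_of_neg (by linarith))
  have e2 : Tendsto (fun x : ℝ => x * Real.exp (-(a / 2) * x)) atTop (𝓝 0) := by
    have h := Real.tendsto_pow_mul_exp_neg_atTop_nhds_zero 1
    have hc : Tendsto (fun x : ℝ => (a / 2) * x) atTop atTop :=
      tendsto_id.const_mul_atTop ha2
    have h2 := (h.comp hc).const_mul (2 / a)
    rw [mul_zero] at h2
    refine h2.congr fun x => ?_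
    simp only [Function.comp_apply, pow_one]
    field_simp
  -- the dominating bound tends to 0
  have h0 : Tendsto (fun x : ℝ => C * (1 + x) * Real.exp (-(a / 2) * x)) atTop (𝓝 0) := by
    have h := (e1.const_mul C).add (e2.const_mul C)
    simp only [mul_zero, add_zero] at h
    refine h.congr fun x => ?_
    ring
  -- integrability of f on (0, ∞)
  have hO : f =O[atTop] fun x => Real.exp (-(a / 2) * x) := by
    rw [Asymptotics.isBigO_iff]
    refine ⟨1, ?_⟩
    filter_upwards [h0.eventually (eventually_le_nhds (by norm_num : (0 : ℝ) < 1)),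
      eventually_ge_atTop (0 : ℝ)] with x hx hx0
    have hwx : |w x| ≤ C * (1 + x) := by
      have := hgrowth x
      rwa [abs_of_nonneg hx0] at this
    have hsplit : Real.exp (-a * x) = Real.exp (-(a / 2) * x) * Real.exp (-(a / 2) * x) := by
      rw [← Real.exp_add]; ring_nf
    have hfx : |f x| ≤ (C * (1 + x) * Real.exp (-(a / 2) * x)) * Real.exp (-(a / 2) * x) := by
      rw [hfdef]
      simp only [abs_mul, Real.abs_exp, hsplit]
      have h1 : (0 : ℝ) ≤ Real.exp (-(a / 2) * x) := (Real.exp_pos _).le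
      nlinarith [Real.exp_pos (-(a / 2) * x), abs_nonneg (w x)]
    simp only [Real.norm_eq_abs, one_mul, Real.abs_exp]
    calc |f x| ≤ (C * (1 + x) * Real.exp (-(a / 2) * x)) * Real.exp (-(a / 2) * x) := hfx
      _ ≤ 1 * Real.exp (-(a / 2) * x) := by
          exact mul_le_mul_of_nonneg_right hx (Real.exp_pos _).le
      _ = Real.exp (-(a / 2) * x) := one_mul _
  have hInt : IntegrableOn f (Set.Ioi (0 : ℝ)) :=
    integrable_of_isBigO_exp_neg ha2 hcont.continuousOn hO
  set J : ℝ := ∫ s in Set.Ioi (0 : ℝ), f s with hJ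
  have hI : Tendsto (fun t : ℝ => ∫ s in (0 : ℝ)..t, f s) atTop (𝓝 J) :=
    intervalIntegral_tendsto_integral_Ioi 0 hInt tendsto_id
  have ht1 : Tendsto (fun i : ℕ => (i : ℝ) * Δt) atTop atTop :=
    tendsto_natCast_atTop_atTop.atTop_mul_const hΔt
  have ht2 : Tendsto (fun i : ℕ => ((i : ℝ) + 1) * Δt) atTop atTop :=
    (tendsto_atTop_add_const_right _ 1 tendsto_natCast_atTop_atTop).atTop_mul_const hΔt
  set q : ℝ := Real.exp (a * Δt) with hqdef
  have hq1 : 1 < q := by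
    rw [hqdef, ← Real.exp_zero]
    exact Real.exp_lt_exp.mpr (by positivity)
  have hq0 : q - 1 ≠ 0 := by linarith
  set r : ℝ := Real.exp (-(a * Δt)) with hrdef
  have hr0 : 0 ≤ r := (Real.exp_pos _).le
  have hr1 : r < 1 := by
    rw [hrdef, ← Real.exp_zero]
    exact Real.exp_lt_exp.mpr (by nlinarith)
  have hrpow : ∀ i : ℕ, (Real.exp (a * ((i : ℝ) * Δt)))⁻¹ = r ^ i := by
    intro i
    rw [← Real.exp_neg, hrdef, ← Real.exp_nat_mul]
    congr 1; ring
  -- the two pieces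
  set A : ℕ → ℝ := fun i =>
    -(b * (w (((i : ℝ) + 1) * Δt) - w ((i : ℝ) * Δt))) /
      (Real.exp (a * ((i : ℝ) * Δt)) * (q - 1)) with hAdef
  set B : ℕ → ℝ := fun i =>
    -(a * b) * ((q * ∫ s in (0 : ℝ)..(((i : ℝ) + 1) * Δt), f s) -
      ∫ s in (0 : ℝ)..((i : ℝ) * Δt), f s) / (q - 1) with hBdef
  have key : ∀ i : ℕ, singPt a b w Δt (i : ℤ) = A i + B i := by
    intro i
    have hE : Real.exp (a * (((i : ℝ) + 1) * Δt)) = Real.exp (a * ((i : ℝ) * Δt)) * q := by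
      rw [hqdef, ← Real.exp_add]; ring_nf
    have h1 : Real.exp (a * ((i : ℝ) * Δt)) ≠ 0 := (Real.exp_pos _).ne'
    simp only [singPt, gPart, hAdef, hBdef, Int.cast_natCast]
    rw [hE, ← hfdef]
    generalize (∫ s in (0:ℝ)..(((i:ℝ) + 1) * Δt), f s) = X
    generalize (∫ s in (0:ℝ)..((i:ℝ) * Δt), f s) = Y
    rw [show Real.exp (a * ((i:ℝ) * Δt)) * q - Real.exp (a * ((i:ℝ) * Δt)) =
      Real.exp (a * ((i:ℝ) * Δt)) * (q - 1) by ring]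
    field_simp
    ring
  have hB : Tendsto B atTop (𝓝 (xStat a b w)) := by
    have h1 := hI.comp ht2
    have h2 := hI.comp ht1
    have h3 := ((((h1.const_mul q).sub h2).const_mul (-(a * b))).div_const (q - 1))
    have hval : -(a * b) * (q * J - J) / (q - 1) = xStat a b w := by
      rw [xStat, ← hJ]
      field_simp
    rw [hval] at h3
    exact h3.congr fun i => by simp only [hBdef, Function.comp_apply]
  have hA : Tendsto A atTop (𝓝 0) := by
    have g1 : Tendsto (fun i : ℕ => r ^ i) atTop (𝓝 0) :=
      tendsto_pow_atTop_nhds_zero_of_lt_one hr0 hr1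
    have g2 : Tendsto (fun i : ℕ => (i : ℝ) * r ^ i) atTop (𝓝 0) := by
      have := (summable_pow_mul_geometric_of_norm_lt_one 1
        (by rwa [Real.norm_eq_abs, abs_of_nonneg hr0] : ‖r‖ < 1)).tendsto_atTop_zero
      simpa using this
    have hg : Tendsto (fun i : ℕ =>
        (|b| * C * (2 + Δt) / (q - 1)) * r ^ i +
        (|b| * C * (2 * Δt) / (q - 1)) * ((i : ℝ) * r ^ i)) atTop (𝓝 0) := by
      have := (g1.const_mul (|b| * C * (2 + Δt) / (q - 1))).add
        (g2.const_mul (|b| * C * (2 * Δt) / (q - 1)))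
      simpa using this
    refine squeeze_zero_norm (fun i => ?_) hg
    have hti : (0 : ℝ) ≤ (i : ℝ) * Δt := by positivity
    have hti1 : (0 : ℝ) ≤ ((i : ℝ) + 1) * Δt := by positivity
    have hbw : |b * (w (((i : ℝ) + 1) * Δt) - w ((i : ℝ) * Δt))| ≤
        |b| * (C * (2 + Δt + 2 * Δt * (i : ℝ))) := by
      rw [abs_mul]
      have h1 := hgrowth (((i : ℝ) + 1) * Δt)
      have h2 := hgrowth ((i : ℝ) * Δt)
      rw [abs_of_nonneg hti1] at h1
      rw [abs_of_nonneg hti] at h2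
      have h3 : |w (((i : ℝ) + 1) * Δt) - w ((i : ℝ) * Δt)| ≤
          C * (1 + ((i : ℝ) + 1) * Δt) + C * (1 + (i : ℝ) * Δt) :=
        (abs_sub _ _).trans (add_le_add h1 h2)
      have h4 : C * (1 + ((i : ℝ) + 1) * Δt) + C * (1 + (i : ℝ) * Δt) =
          C * (2 + Δt + 2 * Δt * (i : ℝ)) := by ring
      rw [h4] at h3
      exact mul_le_mul_of_nonneg_left h3 (abs_nonneg b)
    have hEpos : 0 < Real.exp (a * ((i : ℝ) * Δt)) := Real.exp_pos _
    have hden : 0 < Real.exp (a * ((i : ℝ) * Δt)) * (q - 1) := by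
      apply mul_pos hEpos; linarith
    have : ‖A i‖ = |b * (w (((i : ℝ) + 1) * Δt) - w ((i : ℝ) * Δt))| /
        (Real.exp (a * ((i : ℝ) * Δt)) * (q - 1)) := by
      rw [hAdef]
      simp only [Real.norm_eq_abs, abs_div, abs_neg, abs_of_pos hden]
    rw [this]
    calc |b * (w (((i : ℝ) + 1) * Δt) - w ((i : ℝ) * Δt))| /
          (Real.exp (a * ((i : ℝ) * Δt)) * (q - 1))
        ≤ (|b| * (C * (2 + Δt + 2 * Δt * (i : ℝ)))) /
          (Real.exp (a * ((i : ℝ) * Δt)) * (q - 1)) := by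
          rw [div_eq_mul_inv, div_eq_mul_inv]
          exact mul_le_mul_of_nonneg_right hbw (inv_nonneg.mpr hden.le)
      _ = (|b| * C * (2 + Δt) / (q - 1)) * r ^ i +
          (|b| * C * (2 * Δt) / (q - 1)) * ((i : ℝ) * r ^ i) := by
          rw [div_eq_mul_inv, mul_inv, hrpow i]
          field_simp
  have := hA.add hB
  rw [zero_add] at this
  exact this.congr fun i => (key i).symm
end
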